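/- For tree terms u and t, u is a subterm of t if and only if the code u^τ is a contiguous substring of the code t^τ. -/

import Mathlib

inductive Letter : Type
  | a | b
deriving DecidableEq

open Letter

def alpha (x : List Letter) : ℕ := x.count Letter.a
def beta (x : List Letter) : ℕ := x.count Letter.b

def AE (x : List Letter) : Prop :=
  x ≠ [] ∧ alpha x = beta x + 1 ∧ ∀ u : List Letter, u <+: x → u ≠ x → alpha u ≤ beta u

inductive Tr : Type
  | zero | pair (u v : Tr)
deriving DecidableEq

def code : Tr → List Letter
  | Tr.zero => [Letter.a]
  | Tr.pair u v => Letter.b :: (code u ++ code v)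

inductive Subt : Tr → Tr → Prop
  | refl (t : Tr) : Subt t t
  | left {s u v : Tr} : Subt s u → Subt s (Tr.pair u v)
  | right {s u v : Tr} : Subt s v → Subt s (Tr.pair u v)

/-! Counting `a` as `+1` and `b` as `-1`, every code `t^τ` has weight `1` while each of its
proper prefixes has weight `≤ 0` (the code is almost even, `AE`). Hence no code is a proper
prefix of another, which makes `τ` injective, and every nonempty proper suffix of a code has
positive weight. An occurrence of `u^τ` in `(v,w)^τ = b·v^τ·w^τ` is therefore either the whole
word or lies inside `v^τ` or `w^τ`: if it straddled the border, the overlap with `v^τ` would be a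
nonempty proper suffix of `v^τ` and a proper prefix of `u^τ` at once, of positive and of
nonpositive weight. -/

@[simp] lemma alpha_append (x y : List Letter) : alpha (x ++ y) = alpha x + alpha y :=
  List.count_append ..

@[simp] lemma beta_append (x y : List Letter) : beta (x ++ y) = beta x + beta y :=
  List.count_append ..

@[simp] lemma alpha_cons_b (x : List Letter) : alpha (b :: x) = alpha x := by simp [alpha]

@[simp] lemma beta_cons_b (x : List Letter) : beta (b :: x) = beta x + 1 := by simp [beta]

namespace AE

variable {x y p q s : List Letter}

lemma alpha_le_beta_of_eq_append (hx : AE x) (h : x = p ++ q) (hq : q ≠ []) :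
    alpha p ≤ beta p :=
  hx.2.2 p ⟨q, h.symm⟩ fun hp => hq (by simpa [hp] using h)

lemma beta_lt_alpha_of_eq_append (hx : AE x) (h : x = p ++ q) (hq : q ≠ []) :
    beta q < alpha q := by
  have hp := hx.alpha_le_beta_of_eq_append h hq
  have hw := hx.2.1
  simp only [h, alpha_append, beta_append] at hw
  omega

lemma eq_of_prefix (hx : AE x) (hy : AE y) (h : x <+: y) : x = y := by
  obtain ⟨q, rfl⟩ := h
  by_contra hne
  have := hy.alpha_le_beta_of_eq_append rfl fun hq => hne (by simp [hq])
  have := hx.2.1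
  omega

lemma not_overlap (hx : AE x) (hy : AE y) (hxs : x = s ++ p) (hyp : y = p ++ q)
    (hp : p ≠ []) (hq : q ≠ []) : False := by
  have := hx.beta_lt_alpha_of_eq_append hxs hp
  have := hy.alpha_le_beta_of_eq_append hyp hq
  omega

end AE

lemma code_ne_nil (t : Tr) : code t ≠ [] := by
  cases t <;> simp [code]

lemma ae_code (t : Tr) : AE (code t) := by
  induction t with
  | zero =>
    refine ⟨by simp [code], by simp [code, alpha, beta], fun p ⟨q, hpq⟩ hne => ?_⟩
    rcases List.append_eq_singleton_iff.mp hpq with ⟨rfl, -⟩ | ⟨rfl, rfl⟩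
    · simp [alpha, beta]
    · simp [code] at hne
  | pair u v ihu ihv =>
    refine ⟨code_ne_nil _, ?_, fun p ⟨q, hpq⟩ hne => ?_⟩
    · simp only [code, alpha_cons_b, beta_cons_b, alpha_append, beta_append, ihu.2.1, ihv.2.1]
      omega
    have hq : q ≠ [] := fun hq => hne (by simpa [hq] using hpq)
    rcases p with _ | ⟨c, p⟩
    · simp [alpha, beta]
    obtain ⟨rfl, hsplit⟩ : c = b ∧ p ++ q = code u ++ code v := by simpa [code] using hpq
    rw [alpha_cons_b, beta_cons_b]
    rcases List.append_eq_append_iff.mp hsplit.symm with ⟨r, rfl, hv⟩ | ⟨r, hu, rfl⟩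
    · have := ihv.alpha_le_beta_of_eq_append hv hq
      simp only [alpha_append, beta_append, ihu.2.1]
      omega
    · rcases eq_or_ne r [] with rfl | hr
      · simp only [List.append_nil] at hu
        rw [← hu, ihu.2.1]
      · have := ihu.alpha_le_beta_of_eq_append hu hr
        omega

lemma code_injective : Function.Injective code := by
  intro s
  induction s with
  | zero => rintro (_ | _) h <;> simp_all [code]
  | pair s₁ s₂ ih₁ ih₂ =>
    rintro (_ | ⟨t₁, t₂⟩) h
    · simp [code] at h
    simp only [code, List.cons.injEq, true_and] at h
    have h₁ : code s₁ = code t₁ := by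
      rcases List.prefix_or_prefix_of_prefix ⟨_, h⟩ (List.prefix_append _ _) with hp | hp
      · exact (ae_code s₁).eq_of_prefix (ae_code t₁) hp
      · exact ((ae_code t₁).eq_of_prefix (ae_code s₁) hp).symm
    rw [h₁] at h
    rw [ih₁ h₁, ih₂ (List.append_cancel_left h)]

lemma code_infix_of_subt {u t : Tr} (h : Subt u t) : code u <:+: code t := by
  induction h with
  | refl => exact List.infix_refl _
  | left _ ih => exact ih.trans (List.infix_cons (List.prefix_append _ _).isInfix)
  | right _ ih => exact ih.trans (List.infix_cons (List.suffix_append _ _).isInfix)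

lemma subt_of_code_prefix {u t : Tr} (h : code u <+: code t) : Subt u t :=
  code_injective ((ae_code u).eq_of_prefix (ae_code t) h) ▸ Subt.refl t

lemma subt_of_code_infix {u : Tr} (t : Tr) : code u <:+: code t → Subt u t := by
  induction t with
  | zero =>
    rintro ⟨_ | ⟨c, s⟩, r, h⟩
    · exact subt_of_code_prefix ⟨r, h⟩
    · simp [code, code_ne_nil] at h
  | pair v w ihv ihw =>
    rintro ⟨_ | ⟨c, s⟩, r, h⟩
    · exact subt_of_code_prefix ⟨r, h⟩
    simp only [code, List.cons_append, List.cons.injEq, List.append_assoc] at h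
    rcases List.append_eq_append_iff.mp h.2 with ⟨p, hv, hp⟩ | ⟨p, rfl, hw⟩
    · rcases List.append_eq_append_iff.mp hp with ⟨p', rfl, -⟩ | ⟨q, hu, hw⟩
      · exact Subt.left (ihv ⟨s, p', by simp [hv]⟩)
      rcases eq_or_ne p [] with rfl | hp₀
      · exact Subt.right (ihw ⟨[], r, by simp_all⟩)
      rcases eq_or_ne q [] with rfl | hq₀
      · exact Subt.left (ihv ⟨s, [], by simp_all⟩)
      exact ((ae_code v).not_overlap (ae_code u) hv hu hp₀ hq₀).elim
    · exact Subt.right (ihw ⟨p, r, by simp [hw]⟩)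

theorem stmt13 (u t : Tr) : Subt u t ↔ code u <:+: code t :=
  ⟨code_infix_of_subt, subt_of_code_infix t⟩
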